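/- Let n ≥ 3 and 2 ≤ t ≤ n−1, U := n−t+1. For integers 0 < a < t and 0 < b < U, define the orbit q_0 := (0,0,a,b), q_{e+1} := δ(q_e), and let per(a,b) be the least e ≥ 1 such that R_{q_e} − R_{q_0} ∈ F. Then each per(a,b) is finite, and: lcm{per(a,b) : 0 < a < t, 0 < b < U} = 2 if (n,t) = (3,2); = n+1 if n ≥ 4 and t ∈ {2, n−1}; and = 2(n+1)/gcd(n+1, t) if n ≥ 4 and 2 < t < n−1. Moreover, in the last case per(1,1) = 2(n+1)/gcd(n+1,t). In addition, the rule δ is consistent modulo F: when a = b = 0, the vectors R attached to the two outputs (c, 0, t−c, d) and (0, d, c, U−d) are congruent modulo F. (This is the combinatorial content of the periodicity PD(x_t) of the quantum twist automorphism on the type A_n minuscule unipotent cell.) -/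

import Mathlib

namespace Stmt15

/-- `V = ℤ^B`, vectors indexed by the (1-indexed) boxes of the `t × U` rectangle. -/
abbrev V : Type := ℕ × ℕ → ℤ

/-- `R_{(a,b),(c,d)} = ∑_{a < i ≤ a+c, b < j ≤ b+d} e_{(i,j)}`. -/
def R (a b c d : ℕ) : V := fun q =>
  if a < q.1 ∧ q.1 ≤ a + c ∧ b < q.2 ∧ q.2 ≤ b + d then 1 else 0

/-- `R` applied to a quadruple. -/
def Rq (q : ℕ × ℕ × ℕ × ℕ) : V := R q.1 q.2.1 q.2.2.1 q.2.2.2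

/-- The subgroup `F` generated by the frozen vectors `R_{(0,0),(c,U)}` (`1 ≤ c ≤ t`)
and `R_{(0,0),(t,d)}` (`1 ≤ d ≤ U`). -/
def frozen (t U : ℕ) : AddSubgroup V :=
  AddSubgroup.closure
    ({v | ∃ c, 1 ≤ c ∧ c ≤ t ∧ v = R 0 0 c U} ∪ {v | ∃ d, 1 ≤ d ∧ d ≤ U ∧ v = R 0 0 t d})

/-- The rectangle rule `δ` on quadruples `(a,b,c,d)` with `a = 0` or `b = 0`. -/
def delta (t U : ℕ) : ℕ × ℕ × ℕ × ℕ → ℕ × ℕ × ℕ × ℕ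
  | (a, b, c, d) =>
    if a = 0 then (c - min b c, b - min b c, t - c, d)
    else (a - min a d, d - min a d, c, U - d)

/-- The `δ`-orbit `q_0 = (0,0,a,b)`, `q_{e+1} = δ(q_e)`. -/
def orb (t U a b : ℕ) : ℕ → ℕ × ℕ × ℕ × ℕ
  | 0 => (0, 0, a, b)
  | e + 1 => delta t U (orb t U a b e)

/-- Return times: `e ≥ 1` with `R_{q_e} - R_{q_0} ∈ F`; `per(a,b) = sInf (rets a b)`. -/
def rets (t U a b : ℕ) : Set ℕ :=
  {e | 1 ≤ e ∧ Rq (orb t U a b e) - Rq (orb t U a b 0) ∈ frozen t U}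

/-! ### streams -/

def str (s f : ℕ) : ℕ → ℕ
  | 0 => 0
  | 1 => f
  | k + 2 => str s f k + s

@[simp] lemma str_zero (s f : ℕ) : str s f 0 = 0 := rfl
@[simp] lemma str_one (s f : ℕ) : str s f 1 = f := rfl
lemma str_add_two (s f k : ℕ) : str s f (k + 2) = str s f k + s := rfl

lemma str_two_mul (s f j : ℕ) : str s f (2 * j) = j * s := by
  induction j with
  | zero => simp
  | succ j ih =>
    have h : 2 * (j + 1) = 2 * j + 2 := by ring
    rw [h, str_add_two, ih]; ring

lemma str_two_mul_add_one (s f j : ℕ) : str s f (2 * j + 1) = j * s + f := by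
  induction j with
  | zero => simp
  | succ j ih =>
    have h : 2 * (j + 1) + 1 = 2 * j + 1 + 2 := by ring
    rw [h, str_add_two, ih]; ring

lemma str_lt_succ {s f : ℕ} (h0 : 0 < f) (hfs : f < s) : ∀ k, str s f k < str s f (k + 1)
  | 0 => h0
  | 1 => by rw [show (1:ℕ) + 1 = 0 + 2 from rfl, str_add_two]; simp; omega
  | (k + 2) => by
      rw [str_add_two, show k + 2 + 1 = (k + 1) + 2 from rfl, str_add_two]
      exact Nat.add_lt_add_right (str_lt_succ h0 hfs k) s

lemma str_succ_lt {s f : ℕ} (h0 : 0 < f) (hfs : f < s) : ∀ k, str s f (k + 1) < str s f k + s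
  | 0 => by simp; omega
  | 1 => by rw [show (1:ℕ) + 1 = 0 + 2 from rfl, str_add_two]; simp; omega
  | (k + 2) => by
      rw [show k + 2 + 1 = (k + 1) + 2 from rfl, str_add_two, str_add_two]
      exact Nat.add_lt_add_right (str_succ_lt h0 hfs k) s

lemma str_strictMono {s f : ℕ} (h0 : 0 < f) (hfs : f < s) : StrictMono (str s f) :=
  strictMono_nat_of_lt_succ (str_lt_succ h0 hfs)

lemma str_two_one : ∀ k, str 2 1 k = k
  | 0 => rfl
  | 1 => rfl
  | (k + 2) => by rw [str_add_two, str_two_one k]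

lemma ret_parity {s f k : ℕ} (h2 : s ≠ 2 * f)
    (hk : str s f (k + 1) = str s f k + f) : ∃ j, k = 2 * j ∧ str s f k = j * s := by
  rcases Nat.even_or_odd k with ⟨j, hj⟩ | ⟨j, hj⟩
  · refine ⟨j, by omega, ?_⟩
    rw [show k = 2 * j by omega, str_two_mul]
  · exfalso
    rw [show k = 2 * j + 1 by omega] at hk
    rw [show 2 * j + 1 + 1 = 2 * (j + 1) from by ring] at hk
    rw [str_two_mul, str_two_mul_add_one] at hk
    have : (j + 1) * s = j * s + s := by ring
    omega

/-! ### merge state -/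

def mst (t U a b : ℕ) : ℕ → ℕ × ℕ
  | 0 => (0, 0)
  | e + 1 =>
    if str t a (mst t U a b e).1 ≤ str U b (mst t U a b e).2
    then ((mst t U a b e).1 + 1, (mst t U a b e).2)
    else ((mst t U a b e).1, (mst t U a b e).2 + 1)

def phi (t U a b k l : ℕ) : ℕ × ℕ × ℕ × ℕ :=
  (str t a k - min (str t a k) (str U b l),
   str U b l - min (str t a k) (str U b l),
   str t a (k + 1) - str t a k,
   str U b (l + 1) - str U b l)

lemma orb_eq {t U a b : ℕ} (ha : 0 < a) (hat : a < t) (hb : 0 < b) (hbU : b < U) :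
    ∀ e, orb t U a b e = phi t U a b (mst t U a b e).1 (mst t U a b e).2
  | 0 => by simp [orb, mst, phi]
  | (e + 1) => by
      have ih := orb_eq ha hat hb hbU e
      set k := (mst t U a b e).1 with hk
      set l := (mst t U a b e).2 with hl
      have hA1 := str_lt_succ ha hat k
      have hA2 := str_succ_lt ha hat k
      have hA3 : str t a (k + 1 + 1) = str t a k + t := str_add_two t a k
      have hB1 := str_lt_succ hb hbU l
      have hB2 := str_succ_lt hb hbU l
      have hB3 : str U b (l + 1 + 1) = str U b l + U := str_add_two U b l
      rcases le_or_gt (str t a k) (str U b l) with h | h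
      · have hm : mst t U a b (e + 1) = (k + 1, l) := by
          rw [mst]; rw [← hk, ← hl, if_pos h]
        rw [orb, ih, hm]
        simp only [phi, delta]
        simp only [(by omega : str t a k - min (str t a k) (str U b l) = 0), ↓reduceIte]
        simp only [Prod.mk.injEq, and_true, true_and]
        omega
      · have hm : mst t U a b (e + 1) = (k, l + 1) := by
          rw [mst]; rw [← hk, ← hl, if_neg (by omega)]
        rw [orb, ih, hm]
        simp only [phi, delta]
        simp only [(by omega : str t a k - min (str t a k) (str U b l) = (str t a k - str U b l - 1) + 1), Nat.add_one_ne_zero, ↓reduceIte]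
        simp only [Prod.mk.injEq, and_true, true_and]
        omega

lemma mst_inv {t U a b : ℕ} (ha : 0 < a) (hat : a < t) (hb : 0 < b) (hbU : b < U) :
    ∀ e, (mst t U a b e).1 + (mst t U a b e).2 = e
      ∧ (∀ x < (mst t U a b e).1, str t a x ≤ str U b (mst t U a b e).2)
      ∧ (∀ y < (mst t U a b e).2, str U b y < str t a (mst t U a b e).1)
  | 0 => by simp [mst]
  | (e + 1) => by
      obtain ⟨hsum, h1, h2⟩ := mst_inv ha hat hb hbU e
      set k := (mst t U a b e).1 with hk
      set l := (mst t U a b e).2 with hl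
      rcases le_or_gt (str t a k) (str U b l) with h | h
      · have hm : mst t U a b (e + 1) = (k + 1, l) := by
          rw [mst]; rw [← hk, ← hl, if_pos h]
        rw [hm]
        refine ⟨by omega, ?_, ?_⟩
        · intro x hx
          rcases Nat.lt_succ_iff_lt_or_eq.mp hx with hx' | rfl
          · exact h1 x hx'
          · exact h
        · intro y hy
          exact (h2 y hy).trans (str_lt_succ ha hat k)
      · have hm : mst t U a b (e + 1) = (k, l + 1) := by
          rw [mst]; rw [← hk, ← hl, if_neg (by omega)]
        rw [hm]
        refine ⟨by omega, ?_, ?_⟩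
        · intro x hx
          exact (h1 x hx).trans (str_lt_succ hb hbU l).le
        · intro y hy
          rcases Nat.lt_succ_iff_lt_or_eq.mp hy with hy' | rfl
          · exact h2 y hy'
          · exact h

lemma mst_unique {t U a b : ℕ} (ha : 0 < a) (hat : a < t) (hb : 0 < b) (hbU : b < U)
    {k l : ℕ} (h1 : ∀ x < k, str t a x ≤ str U b l) (h2 : ∀ y < l, str U b y < str t a k) :
    mst t U a b (k + l) = (k, l) := by
  obtain ⟨hsum, g1, g2⟩ := mst_inv ha hat hb hbU (k + l)
  set k' := (mst t U a b (k + l)).1 with hk'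
  set l' := (mst t U a b (k + l)).2 with hl'
  rcases lt_trichotomy k k' with h | h | h
  · exfalso
    have hll : l' < l := by omega
    have := g1 k h
    have := h2 l' hll
    omega
  · have hll : l = l' := by omega
    have hpair : (k, l) = (k', l') := by rw [h, hll]
    rw [hpair, hk', hl']
  · exfalso
    have hll : l < l' := by omega
    have := h1 k' h
    have := g2 l hll
    omega

lemma ret_of {t U a b : ℕ} (ha : 0 < a) (hat : a < t) (hb : 0 < b) (hbU : b < U)
    {k l : ℕ} (hM : str t a k = str U b l)
    (hA1 : str t a (k + 1) = str t a k + a) (hB1 : str U b (l + 1) = str U b l + b) :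
    orb t U a b (k + l) = (0, 0, a, b) := by
  have hmst : mst t U a b (k + l) = (k, l) :=
    mst_unique ha hat hb hbU
      (fun x hx => le_of_lt (hM ▸ str_strictMono ha hat hx))
      (fun y hy => hM ▸ str_strictMono hb hbU hy)
  rw [orb_eq ha hat hb hbU, hmst]
  simp only [phi]
  simp only [Prod.mk.injEq]
  omega

lemma ret_to {t U a b : ℕ} (ha : 0 < a) (hat : a < t) (hb : 0 < b) (hbU : b < U)
    {e : ℕ} (h : orb t U a b e = (0, 0, a, b)) :
    ∃ k l, e = k + l ∧ str t a k = str U b l ∧ str t a (k + 1) = str t a k + a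
      ∧ str U b (l + 1) = str U b l + b := by
  obtain ⟨hsum, -, -⟩ := mst_inv ha hat hb hbU e
  rw [orb_eq ha hat hb hbU] at h
  simp only [phi, Prod.mk.injEq] at h
  exact ⟨(mst t U a b e).1, (mst t U a b e).2, hsum.symm, by omega, by omega, by omega⟩

/-! ### periodicity -/

lemma orb_shift {t U a b P : ℕ} (hP : orb t U a b P = (0, 0, a, b)) :
    ∀ e, orb t U a b (e + P) = orb t U a b e
  | 0 => by rw [Nat.zero_add]; exact hP
  | (e + 1) => by
      rw [show e + 1 + P = (e + P) + 1 from by omega]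
      show delta t U (orb t U a b (e + P)) = delta t U (orb t U a b e)
      rw [orb_shift hP e]

lemma dvd_ret {t U a b P : ℕ} (hP1 : 1 ≤ P) (hP : orb t U a b P = (0, 0, a, b))
    (hmin : ∀ e, 1 ≤ e → e < P → orb t U a b e ≠ (0, 0, a, b)) :
    ∀ e, orb t U a b e = (0, 0, a, b) → P ∣ e := by
  intro e
  induction e using Nat.strong_induction_on with
  | _ e ih =>
    intro he
    rcases Nat.lt_or_ge e P with h | h
    · rcases Nat.eq_zero_or_pos e with rfl | hp
      · exact dvd_zero _
      · exact absurd he (hmin e hp h)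
    · have hsub : orb t U a b (e - P) = (0, 0, a, b) := by
        have h2 := orb_shift hP (e - P)
        rw [Nat.sub_add_cancel h] at h2
        rw [← h2]; exact he
      have hd := ih (e - P) (by omega) hsub
      have : e = (e - P) + P := by omega
      rw [this]; exact Nat.dvd_add hd dvd_rfl


/-! ### the separating functionals -/

def dfun (i j : ℕ) : V →+ ℤ where
  toFun v := v (i, j) + v (1, 1) - v (i, 1) - v (1, j)
  map_zero' := by simp
  map_add' v w := by simp only [Pi.add_apply]; ring

lemma dfun_apply (i j : ℕ) (v : V) :
    dfun i j v = v (i, j) + v (1, 1) - v (i, 1) - v (1, j) := rfl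

lemma dfun_frozen {t U : ℕ} {i j : ℕ} (hi : 1 ≤ i) (hit : i ≤ t) (hj : 1 ≤ j) (hjU : j ≤ U)
    {v : V} (hv : v ∈ frozen t U) : dfun i j v = 0 := by
  have hle : frozen t U ≤ (dfun i j).ker := by
    rw [frozen]
    refine (AddSubgroup.closure_le _).mpr ?_
    rintro w (⟨c, hc1, hc2, rfl⟩ | ⟨d, hd1, hd2, rfl⟩) <;>
      · simp only [SetLike.mem_coe, AddMonoidHom.mem_ker, dfun_apply, R]
        split_ifs <;> omega
  exact AddMonoidHom.mem_ker.mp (hle hv)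

set_option maxHeartbeats 2000000 in
lemma sep {t U a b : ℕ} (ha : 0 < a) (hat : a < t) (hb : 0 < b) (hbU : b < U)
    (a' b' c' d' : ℕ) (hor : a' = 0 ∨ b' = 0) (hc1 : 1 ≤ c') (hc2 : c' < t)
    (hd1 : 1 ≤ d') (hd2 : d' < U) (hne : (a', b', c', d') ≠ ((0:ℕ), (0:ℕ), a, b)) :
    Rq (a', b', c', d') - Rq (0, 0, a, b) ∉ frozen t U := by
  intro hmem
  have key : ∀ i j : ℕ, 1 ≤ i → i ≤ t → 1 ≤ j → j ≤ U →
      (R a' b' c' d' (i, j) - R 0 0 a b (i, j))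
      + (R a' b' c' d' (1, 1) - R 0 0 a b (1, 1))
      - (R a' b' c' d' (i, 1) - R 0 0 a b (i, 1))
      - (R a' b' c' d' (1, j) - R 0 0 a b (1, j)) = 0 := by
    intro i j hi hit hj hjU
    have h0 := dfun_frozen hi hit hj hjU hmem
    rw [map_sub, dfun_apply, dfun_apply] at h0
    simp only [Rq] at h0
    omega
  rcases eq_or_ne (a', b') ((0:ℕ), (0:ℕ)) with hz | hz
  · -- both anchored: compare (c', d') to (a, b)
    have ha0 : a' = 0 := congrArg Prod.fst hz
    have hb0 : b' = 0 := congrArg Prod.snd hz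
    subst ha0; subst hb0
    have hcd : c' ≠ a ∨ d' ≠ b := by
      by_contra hcon
      push_neg at hcon
      exact hne (by rw [hcon.1, hcon.2])
    rcases hcd with hca | hdb
    · have := key (min a c' + 1) U (by omega) (by omega) (by omega) (by omega)
      simp only [R] at this
      split_ifs at this <;> omega
    · have := key t (min b d' + 1) (by omega) (by omega) (by omega) (by omega)
      simp only [R] at this
      split_ifs at this <;> omega
  · -- one of a', b' positive
    have := key t U (by omega) (by omega) (by omega) (by omega)
    simp only [R] at this
    have hpos : 1 ≤ a' ∨ 1 ≤ b' := by
      rcases Nat.eq_zero_or_pos a' with h1 | h1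
      · rcases Nat.eq_zero_or_pos b' with h2 | h2
        · exact absurd (by rw [h1, h2]) hz
        · exact Or.inr h2
      · exact Or.inl h1
    split_ifs at this <;> omega



/-! ### rets and sInf -/

lemma orb_zero (t U a b : ℕ) : orb t U a b 0 = (0, 0, a, b) := rfl

lemma ret_mem_rets {t U a b e : ℕ} (h1 : 1 ≤ e) (h : orb t U a b e = (0, 0, a, b)) :
    e ∈ rets t U a b := by
  refine ⟨h1, ?_⟩
  rw [h, orb_zero, sub_self]
  exact zero_mem _

lemma not_mem_rets {t U a b : ℕ} (ha : 0 < a) (hat : a < t) (hb : 0 < b) (hbU : b < U)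
    {e : ℕ} (hne : orb t U a b e ≠ (0, 0, a, b)) : e ∉ rets t U a b := by
  rintro ⟨he1, hmem⟩
  rw [orb_zero] at hmem
  rw [orb_eq ha hat hb hbU] at hmem hne
  set k := (mst t U a b e).1
  set l := (mst t U a b e).2
  have hA1 := str_lt_succ ha hat k
  have hA2 := str_succ_lt ha hat k
  have hB1 := str_lt_succ hb hbU l
  have hB2 := str_succ_lt hb hbU l
  simp only [phi] at hmem hne
  exact sep ha hat hb hbU _ _ _ _ (by omega) (by omega) (by omega) (by omega) (by omega)
    hne hmem

lemma sInf_rets_eq {t U a b P : ℕ} (ha : 0 < a) (hat : a < t) (hb : 0 < b) (hbU : b < U)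
    (hP1 : 1 ≤ P) (hret : orb t U a b P = (0, 0, a, b))
    (hmin : ∀ e, 1 ≤ e → e < P → orb t U a b e ≠ (0, 0, a, b)) :
    sInf (rets t U a b) = P := by
  refine le_antisymm (Nat.sInf_le (ret_mem_rets hP1 hret)) ?_
  refine le_csInf ⟨P, ret_mem_rets hP1 hret⟩ ?_
  intro e he
  obtain ⟨he1, hm⟩ := he
  by_contra hlt
  push_neg at hlt
  exact not_mem_rets ha hat hb hbU (hmin e he1 hlt) ⟨he1, hm⟩

lemma per_dvd_ret {t U a b e : ℕ} (ha : 0 < a) (hat : a < t) (hb : 0 < b) (hbU : b < U)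
    (h1 : 1 ≤ e) (hret : orb t U a b e = (0, 0, a, b)) :
    sInf (rets t U a b) ∣ e := by
  have hne : {e | 1 ≤ e ∧ orb t U a b e = (0, 0, a, b)}.Nonempty := ⟨e, h1, hret⟩
  obtain ⟨hQ1, hQr⟩ := Nat.sInf_mem hne
  have hmin : ∀ e', 1 ≤ e' →
      e' < sInf {e | 1 ≤ e ∧ orb t U a b e = (0, 0, a, b)} →
      orb t U a b e' ≠ (0, 0, a, b) := by
    intro e' h1' hlt hcon
    exact Nat.notMem_of_lt_sInf hlt ⟨h1', hcon⟩
  rw [sInf_rets_eq ha hat hb hbU hQ1 hQr hmin]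
  exact dvd_ret hQ1 hQr hmin e hret

lemma ret_gcd {t U a b : ℕ} (ha : 0 < a) (hat : a < t) (hb : 0 < b) (hbU : b < U) :
    orb t U a b (2 * (U / Nat.gcd t U) + 2 * (t / Nat.gcd t U)) = (0, 0, a, b) := by
  obtain ⟨s, hs⟩ := Nat.gcd_dvd_left t U
  obtain ⟨u, hu⟩ := Nat.gcd_dvd_right t U
  set g := Nat.gcd t U with hg
  have hg0 : 0 < g := Nat.gcd_pos_of_pos_left U (by omega)
  have hds : t / g = s := by rw [hs]; exact Nat.mul_div_cancel_left s hg0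
  have hdu : U / g = u := by rw [hu]; exact Nat.mul_div_cancel_left u hg0
  rw [hds, hdu]
  refine ret_of ha hat hb hbU ?_ ?_ ?_
  · rw [str_two_mul, str_two_mul, hs, hu]; ring
  · rw [str_two_mul_add_one, str_two_mul]
  · rw [str_two_mul_add_one, str_two_mul]

/-! ### consistency of the rule -/

lemma consistency {t U : ℕ} (c d : ℕ) (hc1 : 1 ≤ c) (hc2 : c ≤ t) (hd1 : 1 ≤ d) (hd2 : d ≤ U) :
    Rq (c, 0, t - c, d) - Rq (0, d, c, U - d) ∈ frozen t U := by
  have hiden : Rq (c, 0, t - c, d) - Rq (0, d, c, U - d) = R 0 0 t d - R 0 0 c U := by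
    funext q
    simp only [Rq, R, Pi.sub_apply]
    split_ifs <;> omega
  rw [hiden, frozen]
  exact sub_mem (AddSubgroup.subset_closure (Set.mem_union_right _ ⟨d, hd1, hd2, rfl⟩))
    (AddSubgroup.subset_closure (Set.mem_union_left _ ⟨c, hc1, hc2, rfl⟩))


theorem stmt15 (n t : ℕ) (hn : 3 ≤ n) (ht2 : 2 ≤ t) (htn : t ≤ n - 1) :
    -- each `per(a,b)` is finite
    (∀ a b, 0 < a → a < t → 0 < b → b < n - t + 1 → (rets t (n - t + 1) a b).Nonempty) ∧
    -- values of the lcm of the periods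
    (n = 3 ∧ t = 2 →
      (Finset.Ioo 0 t ×ˢ Finset.Ioo 0 (n - t + 1)).lcm
          (fun ab => sInf (rets t (n - t + 1) ab.1 ab.2)) = 2) ∧
    (4 ≤ n → t = 2 ∨ t = n - 1 →
      (Finset.Ioo 0 t ×ˢ Finset.Ioo 0 (n - t + 1)).lcm
          (fun ab => sInf (rets t (n - t + 1) ab.1 ab.2)) = n + 1) ∧
    (4 ≤ n → 2 < t → t < n - 1 →
      (Finset.Ioo 0 t ×ˢ Finset.Ioo 0 (n - t + 1)).lcm
          (fun ab => sInf (rets t (n - t + 1) ab.1 ab.2))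
          = 2 * (n + 1) / Nat.gcd (n + 1) t ∧
      sInf (rets t (n - t + 1) 1 1) = 2 * (n + 1) / Nat.gcd (n + 1) t) ∧
    -- consistency of the rule `δ` when `a = b = 0`, modulo `F`
    (∀ c d, 1 ≤ c → c ≤ t → 1 ≤ d → d ≤ n - t + 1 →
      Rq (c, 0, t - c, d) - Rq (0, d, c, (n - t + 1) - d) ∈ frozen t (n - t + 1)) := by
  have hU2 : 2 ≤ n - t + 1 := by omega
  refine ⟨?_, ?_, ?_, ?_, ?_⟩
  · -- Part 1 : nonemptiness
    intro a b ha hat hb hbU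
    have ht0 : 0 < t := by omega
    have hg0 : 0 < Nat.gcd t (n - t + 1) :=
      Nat.gcd_pos_of_pos_left (n - t + 1) ht0
    have h1 : 0 < t / Nat.gcd t (n - t + 1) :=
      Nat.div_pos (Nat.le_of_dvd ht0 (Nat.gcd_dvd_left _ _)) hg0
    exact ⟨_, ret_mem_rets (by omega) (ret_gcd ha hat hb hbU)⟩
  · -- Part 2 : n = 3, t = 2
    rintro ⟨hn3, ht2'⟩
    subst hn3; subst ht2'
    have hval : sInf (rets 2 (3 - 2 + 1) 1 1) = 2 := by
      refine sInf_rets_eq (by norm_num) (by norm_num) (by norm_num) (by norm_num)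
        (by norm_num) (by decide) ?_
      intro e he1 he2 hcon
      have he : e = 1 := by omega
      subst he
      exact absurd hcon (by decide)
    refine Nat.dvd_antisymm ?_ ?_
    · refine Finset.lcm_dvd ?_
      rintro ⟨x, y⟩ hab
      simp only [Finset.mem_product, Finset.mem_Ioo] at hab
      have hx : x = 1 := by omega
      have hy : y = 1 := by omega
      subst hx; subst hy
      exact hval.dvd
    · have hmem : ((1, 1) : ℕ × ℕ) ∈ Finset.Ioo 0 2 ×ˢ Finset.Ioo 0 (3 - 2 + 1) := by
        simp
      have := Finset.dvd_lcm (f := fun ab : ℕ × ℕ => sInf (rets 2 (3 - 2 + 1) ab.1 ab.2)) hmem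
      simpa [hval] using this
  · -- Part 3 : n ≥ 4, t ∈ {2, n-1}
    intro hn4 hcase
    rcases hcase with rfl | ht
    · -- t = 2
      have hUeq : n - 2 + 1 = n - 1 := by omega
      rw [hUeq]
      have hretb : ∀ b', 0 < b' → b' < n - 1 → orb 2 (n - 1) 1 b' (n + 1) = (0, 0, 1, b') := by
        intro b' hb' hb2
        have h := ret_of (t := 2) (U := n - 1) (a := 1) (b := b') (by norm_num) (by norm_num)
          hb' hb2 (k := n - 1) (l := 2) ?_ ?_ ?_
        · rw [show n - 1 + 2 = n + 1 from by omega] at h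
          exact h
        · rw [str_two_one, show (2 : ℕ) = 2 * 1 from rfl, str_two_mul]; omega
        · rw [str_two_one, str_two_one]
        · rw [show (2 : ℕ) + 1 = 2 * 1 + 1 from rfl, str_two_mul_add_one,
            show (2 : ℕ) = 2 * 1 from rfl, str_two_mul]
      have hval : sInf (rets 2 (n - 1) 1 1) = n + 1 := by
        refine sInf_rets_eq (by norm_num) (by norm_num) (by norm_num) (by omega)
          (by omega) (hretb 1 (by norm_num) (by omega)) ?_
        intro e he1 helt hcon
        obtain ⟨k, l, hekl, hM, hA1, hB1⟩ := ret_to (by norm_num) (by norm_num)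
          (by norm_num) (by omega) hcon
        obtain ⟨lam, hlam, hlamM⟩ := ret_parity (by omega : n - 1 ≠ 2 * 1) hB1
        rw [str_two_one] at hM
        rcases Nat.eq_zero_or_pos lam with rfl | hlampos
        · simp at hlamM
          omega
        · have hge : 1 * (n - 1) ≤ lam * (n - 1) := Nat.mul_le_mul_right _ hlampos
          omega
      refine Nat.dvd_antisymm ?_ ?_
      · refine Finset.lcm_dvd ?_
        rintro ⟨x, y⟩ hab
        simp only [Finset.mem_product, Finset.mem_Ioo] at hab
        have hx : x = 1 := by omega
        subst hx
        exact per_dvd_ret (by norm_num) (by norm_num) hab.2.1 hab.2.2 (by omega)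
          (hretb y hab.2.1 hab.2.2)
      · have hmem : ((1, 1) : ℕ × ℕ) ∈ Finset.Ioo 0 2 ×ˢ Finset.Ioo 0 (n - 1) := by
          simp; omega
        have := Finset.dvd_lcm (f := fun ab : ℕ × ℕ => sInf (rets 2 (n - 1) ab.1 ab.2)) hmem
        simpa [hval] using this
    · -- t = n - 1
      subst ht
      have hUeq : n - (n - 1) + 1 = 2 := by omega
      rw [hUeq]
      have hreta : ∀ a', 0 < a' → a' < n - 1 → orb (n - 1) 2 a' 1 (n + 1) = (0, 0, a', 1) := by
        intro a' ha' ha2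
        have h := ret_of (t := n - 1) (U := 2) (a := a') (b := 1) ha' ha2 (by norm_num)
          (by norm_num) (k := 2) (l := n - 1) ?_ ?_ ?_
        · rw [show 2 + (n - 1) = n + 1 from by omega] at h
          exact h
        · rw [str_two_one, show (2 : ℕ) = 2 * 1 from rfl, str_two_mul]; omega
        · rw [show (2 : ℕ) + 1 = 2 * 1 + 1 from rfl, str_two_mul_add_one,
            show (2 : ℕ) = 2 * 1 from rfl, str_two_mul]
        · rw [str_two_one, str_two_one]
      have hval : sInf (rets (n - 1) 2 1 1) = n + 1 := by
        refine sInf_rets_eq (by norm_num) (by omega) (by norm_num) (by norm_num)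
          (by omega) (hreta 1 (by norm_num) (by omega)) ?_
        intro e he1 helt hcon
        obtain ⟨k, l, hekl, hM, hA1, hB1⟩ := ret_to (by norm_num) (by omega)
          (by norm_num) (by norm_num) hcon
        obtain ⟨kap, hkap, hkapM⟩ := ret_parity (by omega : n - 1 ≠ 2 * 1) hA1
        rw [str_two_one] at hM
        rcases Nat.eq_zero_or_pos kap with rfl | hkappos
        · simp at hkapM
          omega
        · have hge : 1 * (n - 1) ≤ kap * (n - 1) := Nat.mul_le_mul_right _ hkappos
          omega
      refine Nat.dvd_antisymm ?_ ?_
      · refine Finset.lcm_dvd ?_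
        rintro ⟨x, y⟩ hab
        simp only [Finset.mem_product, Finset.mem_Ioo] at hab
        have hy : y = 1 := by omega
        subst hy
        exact per_dvd_ret hab.1.1 hab.1.2 (by norm_num) (by norm_num) (by omega)
          (hreta x hab.1.1 hab.1.2)
      · have hmem : ((1, 1) : ℕ × ℕ) ∈ Finset.Ioo 0 (n - 1) ×ˢ Finset.Ioo 0 2 := by
          simp; omega
        have := Finset.dvd_lcm (f := fun ab : ℕ × ℕ => sInf (rets (n - 1) 2 ab.1 ab.2)) hmem
        simpa [hval] using this
  · -- Part 4 : generic
    intro hn4 ht3 htn1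
    have hU3 : 3 ≤ n - t + 1 := by omega
    have ht0 : 0 < t := by omega
    obtain ⟨s, hs⟩ := Nat.gcd_dvd_left t (n - t + 1)
    obtain ⟨u, hu⟩ := Nat.gcd_dvd_right t (n - t + 1)
    set g := Nat.gcd t (n - t + 1) with hgdef
    have hg0 : 0 < g := Nat.gcd_pos_of_pos_left (n - t + 1) ht0
    have hds : t / g = s := by rw [hs]; exact Nat.mul_div_cancel_left s hg0
    have hdu : (n - t + 1) / g = u := by rw [hu]; exact Nat.mul_div_cancel_left u hg0
    have hs1 : 1 ≤ s := by rcases Nat.eq_zero_or_pos s with rfl | h; · omega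
                           · exact h
    have hu1 : 1 ≤ u := by rcases Nat.eq_zero_or_pos u with rfl | h; · omega
                           · exact h
    have hgcdn : Nat.gcd (n + 1) t = g := by
      rw [show n + 1 = (n - t + 1) + t from by omega, Nat.gcd_add_self_left, Nat.gcd_comm]
    have hE0 : 2 * (n + 1) / Nat.gcd (n + 1) t = 2 * u + 2 * s := by
      rw [hgcdn, show 2 * (n + 1) = g * (2 * u + 2 * s) from by
        have hn1 : n + 1 = g * s + g * u := by omega
        rw [hn1]; ring]
      exact Nat.mul_div_cancel_left _ hg0
    have hretE0 : ∀ a b, 0 < a → a < t → 0 < b → b < n - t + 1 →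
        orb t (n - t + 1) a b (2 * u + 2 * s) = (0, 0, a, b) := by
      intro a b ha hat hb hbU
      have h := ret_gcd ha hat hb hbU
      rwa [hds, hdu] at h
    have hlcm1 : Nat.lcm t (n - t + 1) = u * t := by
      have h := Nat.gcd_mul_lcm t (n - t + 1)
      have h2 : g * (u * t) = t * (n - t + 1) := by rw [hu, hs]; ring
      exact Nat.eq_of_mul_eq_mul_left hg0 (h.trans h2.symm)
    have hlcm2 : u * t = s * (n - t + 1) := by rw [hu, hs]; ring
    have hval : sInf (rets t (n - t + 1) 1 1) = 2 * u + 2 * s := by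
      refine sInf_rets_eq (by norm_num) (by omega) (by norm_num) (by omega)
        (by omega) (hretE0 1 1 (by norm_num) (by omega) (by norm_num) (by omega)) ?_
      intro e he1 helt hcon
      obtain ⟨k, l, hekl, hM, hA1, hB1⟩ := ret_to (by norm_num) (by omega)
        (by norm_num) (by omega) hcon
      obtain ⟨kap, hkap, hkapM⟩ := ret_parity (by omega : t ≠ 2 * 1) hA1
      obtain ⟨lam, hlam, hlamM⟩ := ret_parity (by omega : n - t + 1 ≠ 2 * 1) hB1
      rcases Nat.eq_zero_or_pos kap with rfl | hkappos
      · -- k = 0, M = 0, so lam = 0, e = 0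
        have h0 : lam * (n - t + 1) = 0 := by
          simp at hkapM
          omega
        have hl0 : lam = 0 := by
          rcases Nat.eq_zero_or_pos lam with h | h
          · exact h
          · exfalso; have := Nat.mul_pos h (show 0 < n - t + 1 from by omega); omega
        omega
      · have hMpos : 0 < kap * t := Nat.mul_pos hkappos ht0
        have hdvd : Nat.lcm t (n - t + 1) ∣ kap * t := by
          refine Nat.lcm_dvd ⟨kap, mul_comm kap t⟩ ⟨lam, ?_⟩
          rw [mul_comm (n - t + 1) lam]
          omega
        rw [hlcm1] at hdvd
        have hle1 : u * t ≤ kap * t := Nat.le_of_dvd hMpos hdvd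
        have hk_ge : u ≤ kap := Nat.le_of_mul_le_mul_right hle1 ht0
        have hle2 : s * (n - t + 1) ≤ lam * (n - t + 1) := by omega
        have hl_ge : s ≤ lam := Nat.le_of_mul_le_mul_right hle2 (by omega)
        omega
    constructor
    · refine Nat.dvd_antisymm ?_ ?_
      · refine Finset.lcm_dvd ?_
        rintro ⟨x, y⟩ hab
        simp only [Finset.mem_product, Finset.mem_Ioo] at hab
        rw [hE0]
        exact per_dvd_ret hab.1.1 hab.1.2 hab.2.1 hab.2.2 (by omega)
          (hretE0 x y hab.1.1 hab.1.2 hab.2.1 hab.2.2)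
      · have hmem : ((1, 1) : ℕ × ℕ) ∈ Finset.Ioo 0 t ×ˢ Finset.Ioo 0 (n - t + 1) := by
          simp; omega
        have hd := Finset.dvd_lcm
          (f := fun ab : ℕ × ℕ => sInf (rets t (n - t + 1) ab.1 ab.2)) hmem
        rw [hE0]
        simpa [hval] using hd
    · rw [hE0]; exact hval
  · -- Part 5 : consistency
    intro c d hc1 hc2 hd1 hd2
    exact consistency c d hc1 hc2 hd1 hd2


end Stmt15
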